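/- arXiv:2410.05132 — 9 statements merged into one kernel-verified Lean document; each statement's English description precedes it below -/
import Mathlib

section
/- Let E be a real inner product space, let p, x, y ∈ E, let t ∈ [0,1], and set x' := p + t·(x − p). If ‖y − p‖ ≤ ‖x' − p‖, then ‖x' − y‖ ≤ ‖x − y‖. -/
open scoped InnerProductSpace

namespace ConvexBarrier

/- `‖t • v - w‖² - ‖v - w‖² = (t - 1) ((t + 1) ‖v‖² - 2 ⟪v, w⟫)`, and Cauchy–Schwarz with
`‖w‖ ≤ t ‖v‖` makes the second factor at least `(1 - t) ‖v‖² ≥ 0`. -/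
theorem norm_smul_sub_le_norm_sub {E : Type*} [NormedAddCommGroup E] [InnerProductSpace ℝ E]
    {v w : E} {t : ℝ} (ht : t ≤ 1) (hw : ‖w‖ ≤ t * ‖v‖) :
    ‖t • v - w‖ ≤ ‖v - w‖ := by
  have hinner : ⟪v, w⟫_ℝ ≤ t * ‖v‖ ^ 2 :=
    calc ⟪v, w⟫_ℝ ≤ ‖v‖ * ‖w‖ := real_inner_le_norm v w
      _ ≤ ‖v‖ * (t * ‖v‖) := by gcongr
      _ = t * ‖v‖ ^ 2 := by ring
  refine (sq_le_sq₀ (norm_nonneg _) (norm_nonneg _)).1 ?_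
  rw [norm_sub_sq_real, norm_sub_sq_real, norm_smul, mul_pow, Real.norm_eq_abs, sq_abs,
    real_inner_smul_left]
  nlinarith [mul_le_mul_of_nonneg_left hinner (sub_nonneg.2 ht),
    mul_nonneg (sq_nonneg (1 - t)) (sq_nonneg ‖v‖)]

/-- Moving `x` inward along the segment from `p` to `x`, to a point `x'` whose distance
to `p` is still at least `‖y - p‖`, does not increase the distance to `y`. -/
theorem norm_sub_le_of_mem_segment {E : Type*} [NormedAddCommGroup E] [InnerProductSpace ℝ E]
    (p x y : E) (t : ℝ) (ht0 : 0 ≤ t) (ht1 : t ≤ 1)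
    (h : ‖y - p‖ ≤ ‖(p + t • (x - p)) - p‖) :
    ‖(p + t • (x - p)) - y‖ ≤ ‖x - y‖ := by
  rw [add_sub_cancel_left, norm_smul, Real.norm_of_nonneg ht0] at h
  calc ‖p + t • (x - p) - y‖ = ‖t • (x - p) - (y - p)‖ := by congr 1; abel
    _ ≤ ‖(x - p) - (y - p)‖ := norm_smul_sub_le_norm_sub ht1 h
    _ = ‖x - y‖ := by rw [sub_sub_sub_cancel_right]

end ConvexBarrier
end

section
/- Let E be a real inner product space, m ≥ 1 an integer, and let v, w : Fin m → E be two orthonormal families (⟪v i, v j⟫ = δᵢⱼ and ⟪w i, w j⟫ = δᵢⱼ). Let M be the m × m real matrix with entries M i j = ⟪v i, w j⟫. Then |det M| ≤ 1; moreover, if |det M| = 1 then the linear span of {v 1, …, v m} equals the linear span of {w 1, …, w m}. -/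
/-!
With `M i j = ⟪v i, w j⟫`, the matrix `G = Mᵀ M` satisfies `1 - G = gram (w - p)`, where
`p j = ∑ i, ⟪v i, w j⟫ • v i` is the projection of `w j` onto the span of `v`. Thus
`0 ≤ G ≤ 1` in the Loewner order, so the eigenvalues of `G` lie in `[0, 1]` and
`det M ^ 2 = det G ≤ 1`. If `|det M| = 1`, all eigenvalues equal `1`, so `G = 1`, the Gram matrix
of the `w j - p j` vanishes, and every `w j` lies in the span of `v`; the two spans then agree
by dimension.
-/

open RealInnerProductSpace Matrix

lemma Submodule.span_range_eq_of_forall_mem_span {K V ι : Type*} [DivisionRing K] [AddCommGroup V]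
    [Module K V] [Fintype ι] {v w : ι → V} (hw : LinearIndependent K w)
    (h : ∀ j, w j ∈ span K (Set.range v)) : span K (Set.range v) = span K (Set.range w) := by
  have := FiniteDimensional.span_of_finite K (Set.finite_range v)
  refine (eq_of_le_of_finrank_le (span_le.mpr (Set.range_subset_iff.mpr h)) ?_).symm
  rw [finrank_span_eq_card hw]
  exact finrank_range_le_card v

section

variable {E : Type*} [NormedAddCommGroup E] [InnerProductSpace ℝ E]
  {ι : Type*} [Fintype ι] {v : ι → E}

lemma Orthonormal.inner_sub_sum_inner_smul_right (hv : Orthonormal ℝ v) (x : E) (k : ι) :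
    ⟪v k, x - ∑ i, ⟪v i, x⟫ • v i⟫ = 0 := by
  rw [inner_sub_right, hv.inner_right_fintype, sub_self]

lemma Orthonormal.gram_sub_sum_inner_smul {κ : Type*} (hv : Orthonormal ℝ v) (w : κ → E) :
    gram ℝ (fun j => w j - ∑ i, ⟪v i, w j⟫ • v i) =
      gram ℝ w - (of fun i j => ⟪v i, w j⟫)ᵀ * of fun i j => ⟪v i, w j⟫ := by
  ext j k
  have hproj : ⟪w j - ∑ i, ⟪v i, w j⟫ • v i, ∑ i, ⟪v i, w k⟫ • v i⟫ = 0 := by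
    refine (inner_sum _ _ _).trans (Finset.sum_eq_zero fun i _ => ?_)
    rw [inner_smul_right, real_inner_comm (v i), hv.inner_sub_sum_inner_smul_right, mul_zero]
  rw [gram_apply, inner_sub_right, hproj, sub_zero, inner_sub_left, sum_inner]
  simp only [real_inner_smul_left, Matrix.sub_apply, gram_apply, mul_apply, transpose_apply,
    of_apply]

end

namespace Matrix

variable {n : Type*} [Fintype n] [DecidableEq n] {G : Matrix n n ℝ}

lemma IsHermitian.eigenvalues_le_one (hG : G.IsHermitian) (h1G : (1 - G).PosSemidef) (i : n) :
    hG.eigenvalues i ≤ 1 := by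
  set e := hG.eigenvectorBasis i
  have h := h1G.re_dotProduct_nonneg (e : n → ℝ)
  have he : star (e : n → ℝ) ⬝ᵥ (e : n → ℝ) = 1 := by
    rw [dotProduct_comm, ← EuclideanSpace.inner_eq_star_dotProduct, real_inner_self_eq_norm_sq,
      hG.eigenvectorBasis.orthonormal.1 i, one_pow]
  rw [sub_mulVec, one_mulVec, dotProduct_sub, he] at h
  simp only [RCLike.re_to_real] at h
  rw [hG.eigenvalues_eq i]
  simpa using h

lemma PosSemidef.det_le_one (hG : G.PosSemidef) (h1G : (1 - G).PosSemidef) : G.det ≤ 1 := by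
  rw [hG.1.det_eq_prod_eigenvalues]
  exact Finset.prod_le_one (fun i _ => hG.eigenvalues_nonneg i)
    (fun i _ => hG.1.eigenvalues_le_one h1G i)

lemma PosSemidef.eq_one_of_det_eq_one (hG : G.PosSemidef) (h1G : (1 - G).PosSemidef)
    (hdet : G.det = 1) : G = 1 := by
  have heig : ∀ i, hG.1.eigenvalues i = 1 := by
    intro k
    refine le_antisymm (hG.1.eigenvalues_le_one h1G k) ?_
    calc 1 = ∏ i, hG.1.eigenvalues i := by rw [← hdet, hG.1.det_eq_prod_eigenvalues]; rfl
      _ = hG.1.eigenvalues k * ∏ i ∈ Finset.univ.erase k, hG.1.eigenvalues i :=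
        (Finset.mul_prod_erase _ _ (Finset.mem_univ k)).symm
      _ ≤ hG.1.eigenvalues k * 1 := by
        gcongr
        · exact hG.eigenvalues_nonneg k
        · exact Finset.prod_le_one (fun i _ => hG.eigenvalues_nonneg i)
            (fun i _ => hG.1.eigenvalues_le_one h1G i)
      _ = hG.1.eigenvalues k := mul_one _
  rw [hG.1.spectral_theorem]
  have : (RCLike.ofReal ∘ hG.1.eigenvalues : n → ℝ) = fun _ => 1 := funext heig
  rw [this, diagonal_one, map_one]

end Matrix

theorem abs_det_gram_orthonormal_le_one_general {E : Type*} [NormedAddCommGroup E]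
    [InnerProductSpace ℝ E] (m : ℕ) (v w : Fin m → E)
    (hv : Orthonormal ℝ v) (hw : Orthonormal ℝ w)
    (M : Matrix (Fin m) (Fin m) ℝ) (hM : ∀ i j, M i j = ⟪v i, w j⟫) :
    |M.det| ≤ 1 ∧
      (|M.det| = 1 →
        Submodule.span ℝ (Set.range v) = Submodule.span ℝ (Set.range w)) := by
  have hMv : M = of fun i j => ⟪v i, w j⟫ := ext hM
  set u : Fin m → E := fun j => w j - ∑ i, ⟪v i, w j⟫ • v i
  set G := Mᵀ * M
  have hGu : 1 - G = gram ℝ u := by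
    rw [hv.gram_sub_sum_inner_smul, gram_eq_one_iff_orthonormal.mpr hw, ← hMv]
  have hG : G.PosSemidef := by
    simpa [G, conjTranspose_eq_transpose_of_trivial] using posSemidef_conjTranspose_mul_self M
  have h1G : (1 - G).PosSemidef := hGu ▸ posSemidef_gram ℝ u
  have hdet : G.det = M.det ^ 2 := by rw [det_mul, det_transpose, sq]
  refine ⟨sq_le_one_iff_abs_le_one _ |>.mp (hdet ▸ hG.det_le_one h1G), fun habs => ?_⟩
  have hG1 : G = 1 := hG.eq_one_of_det_eq_one h1G (by rw [hdet, ← sq_abs, habs, one_pow])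
  have hwv : ∀ j, w j = ∑ i, ⟪v i, w j⟫ • v i := fun j => by
    have huj := congrFun (congrFun hGu j) j
    rw [hG1, sub_self, Matrix.zero_apply, gram_apply, eq_comm, inner_self_eq_zero] at huj
    exact sub_eq_zero.mp huj
  refine Submodule.span_range_eq_of_forall_mem_span hw.linearIndependent fun j => ?_
  rw [hwv j]
  exact Submodule.sum_mem _ fun i _ => Submodule.smul_mem _ _ (Submodule.subset_span ⟨i, rfl⟩)

/-- For two orthonormal families `v, w : Fin m → E` in a real inner product space, the
matrix `M i j = ⟪v i, w j⟫` has `|det M| ≤ 1`, with equality only if the spans of the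
two families coincide. -/
theorem abs_det_gram_orthonormal_le_one {E : Type*} [NormedAddCommGroup E]
    [InnerProductSpace ℝ E] (m : ℕ) (hm : 1 ≤ m) (v w : Fin m → E)
    (hv : Orthonormal ℝ v) (hw : Orthonormal ℝ w)
    (M : Matrix (Fin m) (Fin m) ℝ) (hM : ∀ i j, M i j = ⟪v i, w j⟫) :
    |M.det| ≤ 1 ∧
      (|M.det| = 1 →
        Submodule.span ℝ (Set.range v) = Submodule.span ℝ (Set.range w)) :=
  abs_det_gram_orthonormal_le_one_general m v w hv hw M hM
end

section
/- Let φ : ℝ → ℝ be continuous and 2π-periodic with ∫₀^{2π} φ(t) dt = 0, and let Ψ(t) := ∫₀^{t} φ(s) ds (which is then 2π-periodic). Then there is a well-defined function ψ : ℝ² ∖ {0} → ℝ satisfying ψ(s·(cos t, sin t)) = Ψ(t) for all s > 0 and t ∈ ℝ, this ψ is positively 0-homogeneous, and ψ is differentiable at every x = (x₁, x₂) ≠ 0 with gradient ∇ψ(x) = φ(x/‖x‖) · x^⊥ / ‖x‖², where x^⊥ := (−x₂, x₁). -/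
/-!
Identify `ℝ²` with `ℂ` and put `ψ z := Ψ (arg z)`. Since `Ψ` is `2π`-periodic (the average of `φ`
vanishes), `Ψ ∘ arg` only depends on the angle of `z`, which makes the value on rays and the
homogeneity immediate. The function `arg` jumps across the negative real axis, but `Ψ ∘ arg` does
not: near a point `z` of angle `t` it agrees with `w ↦ Ψ (t + arg (e^{-it} w))`, and `e^{-it} z` is
a positive real, where `arg = Im ∘ log` is smooth with derivative `w ↦ Im (w / z)`. In coordinates,
`Im (y / x) = ⟪x^⊥, y⟫ / ‖x‖²`.
-/

open Real

theorem Function.Periodic.periodic_intervalIntegral {E : Type*} [NormedAddCommGroup E]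
    [NormedSpace ℝ E] {f : ℝ → E} {T : ℝ} (hf : Function.Periodic f T)
    (h_int : ∀ t₁ t₂, IntervalIntegrable f MeasureTheory.volume t₁ t₂)
    (h_zero : ∫ x in (0:ℝ)..T, f x = 0) :
    Function.Periodic (fun t => ∫ x in (0:ℝ)..t, f x) T := fun t => by
  simp only [hf.intervalIntegral_add_eq_add 0 t h_int, zero_add, h_zero, add_zero]

theorem Function.Periodic.eq_of_coe_angle_eq {α : Type*} {Ψ : ℝ → α}
    (hΨ : Function.Periodic Ψ (2 * π)) {a b : ℝ} (hab : (a : Real.Angle) = b) : Ψ a = Ψ b := by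
  rw [← hΨ.lift_coe, ← hΨ.lift_coe]
  exact congrArg hΨ.lift hab

namespace Complex

theorem hasFDerivAt_arg {z : ℂ} (hz : z ∈ slitPlane) :
    HasFDerivAt arg (imCLM ∘L ContinuousLinearMap.mul ℝ ℂ z⁻¹) z := by
  have hlog := (imCLM.hasFDerivAt.comp z ((hasDerivAt_log hz).hasFDerivAt.restrictScalars ℝ))
  refine (hlog.congr_of_eventuallyEq (.of_eq (funext fun w => (log_im w).symm))).congr_fderiv ?_
  ext w; simp [mul_comm]

theorem arg_coe_angle_eq_add_arg_exp_neg_mul (t : ℝ) {z : ℂ} (hz : z ≠ 0) :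
    (arg z : Real.Angle) = ↑(t + arg (exp (-t * I) * z)) := by
  have h_exp : (arg (exp (t * I)) : Real.Angle) = t := by
    simpa [← exp_mul_I] using arg_mul_cos_add_sin_mul_I_coe_angle one_pos (t : Real.Angle)
  rw [Real.Angle.coe_add, ← h_exp, ← arg_mul_coe_angle (exp_ne_zero _)
    (mul_ne_zero (exp_ne_zero _) hz), ← mul_assoc, ← exp_add]
  simp

theorem _root_.Function.Periodic.hasFDerivAt_comp_arg {Ψ : ℝ → ℝ} {Ψ' t : ℝ}
    (hΨ : Function.Periodic Ψ (2 * π)) (hd : HasDerivAt Ψ Ψ' t) {z : ℂ} (hz : z ≠ 0)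
    (ht : (t : Real.Angle) = arg z) :
    HasFDerivAt (fun w => Ψ (arg w)) (Ψ' • imCLM ∘L ContinuousLinearMap.mul ℝ ℂ z⁻¹) z := by
  set c := exp (-t * I)
  have hc : c ≠ 0 := exp_ne_zero _
  have h_arg : arg (c * z) = 0 := by
    have := arg_coe_angle_eq_add_arg_exp_neg_mul t hz
    rw [← ht, Real.Angle.coe_add, left_eq_add, arg_coe_angle_eq_iff_eq_toReal] at this
    simpa [c] using this
  have h_slit : c * z ∈ slitPlane :=
    mem_slitPlane_iff_arg.2 ⟨by rw [h_arg]; exact pi_pos.ne, mul_ne_zero hc hz⟩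
  have h_rot : HasFDerivAt (fun w => t + arg (c * w))
      (imCLM ∘L ContinuousLinearMap.mul ℝ ℂ z⁻¹) z := by
    have := (hasFDerivAt_arg h_slit).comp z (ContinuousLinearMap.mul ℝ ℂ c).hasFDerivAt
    refine (this.const_add t).congr_fderiv ?_
    ext w; simp [mul_assoc, hc]
  have hd' : HasDerivAt Ψ Ψ' (t + arg (c * z)) := by rwa [h_arg, add_zero]
  refine (hd'.comp_hasFDerivAt z h_rot).congr_of_eventuallyEq ?_
  filter_upwards [isOpen_compl_singleton.mem_nhds hz] with w hw
  exact hΨ.eq_of_coe_angle_eq (arg_coe_angle_eq_add_arg_exp_neg_mul t hw)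

end Complex

local notation "toℂ" => Complex.orthonormalBasisOneI.repr.symm

theorem arg_toComplex_smul_cos_sin {s : ℝ} (hs : 0 < s) (t : ℝ) :
    (Complex.arg (toℂ (s • WithLp.toLp 2 ![cos t, sin t])) : Real.Angle) = t := by
  simpa [Complex.orthonormalBasisOneI_repr_symm_apply, mul_add, mul_assoc] using
    Complex.arg_mul_cos_add_sin_mul_I_coe_angle hs (t : Real.Angle)

theorem im_inv_mul_toComplex (x y : EuclideanSpace ℝ (Fin 2)) :
    ((toℂ x)⁻¹ * toℂ y).im = inner ℝ ((‖x‖ ^ 2)⁻¹ • WithLp.toLp 2 ![-(x 1), x 0]) y := by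
  simp [Complex.orthonormalBasisOneI_repr_symm_apply, EuclideanSpace.real_norm_sq_eq,
    Complex.normSq_apply, inner_smul_left, PiLp.inner_apply, Fin.sum_univ_two]
  ring

/-- From a continuous `2π`-periodic function `φ` with zero average one builds a
`0`-homogeneous function `ψ` on `ℝ² \ {0}` whose value on the ray of angle `t` is the
angular primitive `Ψ(t) = ∫₀ᵗ φ`, and whose gradient at `x ≠ 0` is
`φ(x/‖x‖) • x^⊥ / ‖x‖²`, where `x^⊥ = (-x₂, x₁)`. -/
theorem exists_zero_homogeneous_angular_primitive (φ : ℝ → ℝ) (hφc : Continuous φ)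
    (hφp : Function.Periodic φ (2 * π))
    (hφ0 : ∫ t in (0:ℝ)..(2 * π), φ t = 0)
    (Ψ : ℝ → ℝ) (hΨ : ∀ t, Ψ t = ∫ s in (0:ℝ)..t, φ s) :
    ∃ ψ : EuclideanSpace ℝ (Fin 2) → ℝ,
      (∀ s t : ℝ, 0 < s →
        ψ (s • (WithLp.toLp 2 ![Real.cos t, Real.sin t] : EuclideanSpace ℝ (Fin 2))) = Ψ t) ∧
      (∀ s : ℝ, 0 < s → ∀ x : EuclideanSpace ℝ (Fin 2), x ≠ 0 → ψ (s • x) = ψ x) ∧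
      (∀ x : EuclideanSpace ℝ (Fin 2), x ≠ 0 → ∀ t : ℝ,
        ‖x‖⁻¹ • x = (WithLp.toLp 2 ![Real.cos t, Real.sin t] : EuclideanSpace ℝ (Fin 2)) →
        HasGradientAt ψ
          ((φ t / ‖x‖ ^ 2) • (WithLp.toLp 2 ![-(x 1), x 0] : EuclideanSpace ℝ (Fin 2))) x) := by
  have hΨ_fun : Ψ = fun t => ∫ s in (0:ℝ)..t, φ s := funext hΨ
  have hΨp : Function.Periodic Ψ (2 * π) :=
    hΨ_fun ▸ hφp.periodic_intervalIntegral (fun _ _ => hφc.intervalIntegrable _ _) hφ0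
  refine ⟨fun x => Ψ (Complex.arg (toℂ x)), fun s t hs => ?_, fun s hs x _ => ?_,
    fun x hx t hxt => ?_⟩
  · exact hΨp.eq_of_coe_angle_eq (arg_toComplex_smul_cos_sin hs t)
  · simp only [map_smul, Complex.real_smul, Complex.arg_real_mul _ hs]
  · have hx_ray : x = ‖x‖ • WithLp.toLp 2 ![cos t, sin t] := by
      rw [← hxt, smul_inv_smul₀ (norm_ne_zero_iff.2 hx)]
    have ht : (t : Real.Angle) = Complex.arg (toℂ x) := by
      rw [hx_ray, arg_toComplex_smul_cos_sin (norm_pos_iff.2 hx)]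
    have hd : HasDerivAt Ψ (φ t) t := hΨ_fun ▸ (hφc.integral_hasStrictDerivAt 0 t).hasDerivAt
    rw [hasGradientAt_iff_hasFDerivAt]
    have hz : toℂ x ≠ 0 := (LinearIsometryEquiv.map_eq_zero_iff _).not.2 hx
    refine ((hΨp.hasFDerivAt_comp_arg hd hz ht).comp x
      (LinearIsometryEquiv.hasFDerivAt _)).congr_fderiv ?_
    ext y
    simp only [InnerProductSpace.toDual_apply_apply, ContinuousLinearMap.comp_apply, smul_apply,
      ContinuousLinearMap.mul_apply', Complex.imCLM_apply, LinearIsometryEquiv.coe_coe'',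
      smul_eq_mul, im_inv_mul_toComplex, inner_smul_left, div_eq_mul_inv, conj_trivial, mul_assoc]
end

section
/- Let φ : ℝ → ℝ be continuous, and let ψ : ℝ² ∖ {0} → ℝ be differentiable with ∇ψ(x) = φ(x/‖x‖) · x^⊥ / ‖x‖² for all x ≠ 0, where x^⊥ := (−x₂, x₁). In ℝ^{m+n} with standard orthonormal coordinates e₁, …, e_{m+n}, write x(w) := (w₁, w₂) ∈ ℝ² and x^⊥(w) := −w₂ e₁ + w₁ e₂, and define the vector field X(w) := ψ(x(w)) · x^⊥(w) on {w : x(w) ≠ 0}. Then X is differentiable on its domain, and for every point z with x(z) ≠ 0 and every orthonormal family v₁, …, vₘ of vectors in ℝ^{m+n}, one has ∑_{i=1}^{m} ⟪(DX)(z) vᵢ, vᵢ⟫ = (φ(x(z)/‖x(z)‖) / ‖x(z)‖²) · ∑_{i=1}^{m} ⟪x^⊥(z), vᵢ⟫². -/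
/-!
With `P` the projection `w ↦ x(w)` and `J` the skew map `w ↦ x^⊥(w)`, the field is
`X = (ψ ∘ P) • J`, so by the Leibniz rule `DX(z) u = ψ(P z) J u + ⟪∇ψ(P z), P u⟫ J z`.
Skewness kills the first term in `⟪DX(z) u, u⟫`, and `⟪(P z)^⊥, P u⟫ = ⟪J z, u⟫` turns the
second into `φ / ‖x‖² · ⟪x^⊥(z), u⟫²`.
-/

open RealInnerProductSpace

/-- The first two coordinates of `w ∈ ℝ^d` (`d ≥ 2`), as a point of the Euclidean plane. -/
noncomputable def planeCoord (d : ℕ) (hd : 2 ≤ d) (w : EuclideanSpace ℝ (Fin d)) :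
    EuclideanSpace ℝ (Fin 2) :=
  WithLp.toLp 2 ![w ⟨0, by omega⟩, w ⟨1, by omega⟩]

/-- The rotated vector `x^⊥(w) = -w₂ e₁ + w₁ e₂` in `ℝ^d` (`d ≥ 2`). -/
noncomputable def planePerp (d : ℕ) (hd : 2 ≤ d) (w : EuclideanSpace ℝ (Fin d)) :
    EuclideanSpace ℝ (Fin d) :=
  w ⟨0, by omega⟩ • EuclideanSpace.single ⟨1, by omega⟩ (1 : ℝ) -
    w ⟨1, by omega⟩ • EuclideanSpace.single ⟨0, by omega⟩ (1 : ℝ)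

theorem EuclideanSpace.exists_inv_norm_smul_eq_cos_sin {x : EuclideanSpace ℝ (Fin 2)}
    (hx : x ≠ 0) : ∃ t : ℝ, ‖x‖⁻¹ • x = WithLp.toLp 2 ![Real.cos t, Real.sin t] := by
  obtain ⟨c, rfl⟩ := Complex.orthonormalBasisOneI.repr.surjective x
  have hc : c ≠ 0 := by simpa using hx
  refine ⟨c.arg, ?_⟩
  rw [LinearIsometryEquiv.norm_map, Complex.cos_arg hc, Complex.sin_arg]
  ext i
  fin_cases i <;> simp [div_eq_inv_mul]

section SkewField

variable {E F : Type*} [NormedAddCommGroup E] [InnerProductSpace ℝ E]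
  [NormedAddCommGroup F] [InnerProductSpace ℝ F] [CompleteSpace F]
  {ψ : F → ℝ} {g : F} {P : E →L[ℝ] F} {J : E →L[ℝ] E} {z : E}

theorem HasGradientAt.hasFDerivAt_comp_smul (hψ : HasGradientAt ψ g (P z)) :
    HasFDerivAt (fun w => ψ (P w) • J w)
      (ψ (P z) • J + ((InnerProductSpace.toDual ℝ F g).comp P).smulRight (J z)) z :=
  (hψ.hasFDerivAt.comp z P.hasFDerivAt).smul J.hasFDerivAt

theorem HasGradientAt.inner_fderiv_comp_smul_apply_self (hψ : HasGradientAt ψ g (P z))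
    (hJ : ∀ u, ⟪J u, u⟫ = 0) (u : E) :
    ⟪fderiv ℝ (fun w => ψ (P w) • J w) z u, u⟫ = ⟪g, P u⟫ * ⟪J z, u⟫ := by
  rw [hψ.hasFDerivAt_comp_smul.fderiv]
  simp only [add_apply, smul_apply, ContinuousLinearMap.smulRight_apply,
    ContinuousLinearMap.comp_apply,
    InnerProductSpace.toDual_apply_apply, inner_add_left, real_inner_smul_left, hJ]
  ring

end SkewField

section PlaneCoordinates

variable (d : ℕ) (hd : 2 ≤ d)

noncomputable def planeCoordCLM : EuclideanSpace ℝ (Fin d) →L[ℝ] EuclideanSpace ℝ (Fin 2) :=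
  LinearMap.toContinuousLinearMap
    { toFun := planeCoord d hd
      map_add' := fun w w' => by ext j; fin_cases j <;> simp [planeCoord]
      map_smul' := fun c w => by ext j; fin_cases j <;> simp [planeCoord] }

noncomputable def planePerpCLM : EuclideanSpace ℝ (Fin d) →L[ℝ] EuclideanSpace ℝ (Fin d) :=
  LinearMap.toContinuousLinearMap
    { toFun := planePerp d hd
      map_add' := fun w w' => by simp only [planePerp, PiLp.add_apply, add_smul]; abel
      map_smul' := fun c w => by
        simp only [planePerp, PiLp.smul_apply, RingHom.id_apply, smul_sub, smul_smul,
          smul_eq_mul] }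

@[simp]
theorem planeCoordCLM_apply (w : EuclideanSpace ℝ (Fin d)) :
    planeCoordCLM d hd w = planeCoord d hd w := rfl

@[simp]
theorem planePerpCLM_apply (w : EuclideanSpace ℝ (Fin d)) :
    planePerpCLM d hd w = planePerp d hd w := rfl

theorem inner_planePerp_self (u : EuclideanSpace ℝ (Fin d)) : ⟪planePerp d hd u, u⟫ = 0 := by
  simp only [planePerp, inner_sub_left, real_inner_smul_left, EuclideanSpace.inner_single_left,
    map_one, one_mul]
  ring

theorem inner_rotate_planeCoord_planeCoord (z u : EuclideanSpace ℝ (Fin d)) :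
    ⟪(WithLp.toLp 2 ![-(planeCoord d hd z 1), planeCoord d hd z 0] : EuclideanSpace ℝ (Fin 2)),
      planeCoord d hd u⟫ = ⟪planePerp d hd z, u⟫ := by
  simp only [planePerp, inner_sub_left, real_inner_smul_left, EuclideanSpace.inner_single_left,
    map_one, one_mul]
  simp only [PiLp.inner_apply, Fin.sum_univ_two, planeCoord, RCLike.inner_apply, conj_trivial,
    Matrix.cons_val_zero, Matrix.cons_val_one]
  ring

end PlaneCoordinates

theorem tangential_divergence_winding_field_general (φ : ℝ → ℝ)
    (ψ : EuclideanSpace ℝ (Fin 2) → ℝ)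
    (hψ : ∀ x : EuclideanSpace ℝ (Fin 2), x ≠ 0 → ∀ t : ℝ,
      ‖x‖⁻¹ • x = (WithLp.toLp 2 ![Real.cos t, Real.sin t] : EuclideanSpace ℝ (Fin 2)) →
      HasGradientAt ψ
        ((φ t / ‖x‖ ^ 2) • (WithLp.toLp 2 ![-(x 1), x 0] : EuclideanSpace ℝ (Fin 2))) x)
    (m n : ℕ) (hmn : 2 ≤ m + n)
    (X : EuclideanSpace ℝ (Fin (m + n)) → EuclideanSpace ℝ (Fin (m + n)))
    (hX : ∀ w, X w = ψ (planeCoord (m + n) hmn w) • planePerp (m + n) hmn w)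
    (z : EuclideanSpace ℝ (Fin (m + n))) (hz : planeCoord (m + n) hmn z ≠ 0)
    (v : Fin m → EuclideanSpace ℝ (Fin (m + n))) :
    DifferentiableAt ℝ X z ∧
      ∀ t : ℝ,
        ‖planeCoord (m + n) hmn z‖⁻¹ • planeCoord (m + n) hmn z =
          (WithLp.toLp 2 ![Real.cos t, Real.sin t] : EuclideanSpace ℝ (Fin 2)) →
        ∑ i, ⟪fderiv ℝ X z (v i), v i⟫ =
          (φ t / ‖planeCoord (m + n) hmn z‖ ^ 2) *
            ∑ i, ⟪planePerp (m + n) hmn z, v i⟫ ^ 2 := by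
  have hX' : X = fun w => ψ (planeCoordCLM _ hmn w) • planePerpCLM _ hmn w := funext hX
  obtain ⟨t₀, ht₀⟩ := EuclideanSpace.exists_inv_norm_smul_eq_cos_sin hz
  refine ⟨hX' ▸ (hψ _ hz t₀ ht₀).hasFDerivAt_comp_smul.differentiableAt, fun t ht => ?_⟩
  rw [Finset.mul_sum, hX']
  refine Finset.sum_congr rfl fun i _ => ?_
  rw [(hψ _ hz t ht).inner_fderiv_comp_smul_apply_self (inner_planePerp_self _ hmn),
    planeCoordCLM_apply, planePerpCLM_apply, real_inner_smul_left,
    inner_rotate_planeCoord_planeCoord]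
  ring

/-- Tangential divergence computation for the vector field `X(w) = ψ(x(w)) • x^⊥(w)`:
if `∇ψ(x) = φ(x/‖x‖) • x^⊥/‖x‖²` on `ℝ² \ {0}` (with the unit vector `x/‖x‖` written as
`(cos t, sin t)`), then `X` is differentiable wherever `x(w) ≠ 0` and, for any orthonormal
family `v₁, …, vₘ`, `∑ᵢ ⟪DX(z)vᵢ, vᵢ⟫ = (φ(x(z)/‖x(z)‖)/‖x(z)‖²) ∑ᵢ ⟪x^⊥(z), vᵢ⟫²`. -/
theorem tangential_divergence_winding_field (φ : ℝ → ℝ) (hφc : Continuous φ)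
    (ψ : EuclideanSpace ℝ (Fin 2) → ℝ)
    (hψ : ∀ x : EuclideanSpace ℝ (Fin 2), x ≠ 0 → ∀ t : ℝ,
      ‖x‖⁻¹ • x = (WithLp.toLp 2 ![Real.cos t, Real.sin t] : EuclideanSpace ℝ (Fin 2)) →
      HasGradientAt ψ
        ((φ t / ‖x‖ ^ 2) • (WithLp.toLp 2 ![-(x 1), x 0] : EuclideanSpace ℝ (Fin 2))) x)
    (m n : ℕ) (hmn : 2 ≤ m + n)
    (X : EuclideanSpace ℝ (Fin (m + n)) → EuclideanSpace ℝ (Fin (m + n)))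
    (hX : ∀ w, X w = ψ (planeCoord (m + n) hmn w) • planePerp (m + n) hmn w)
    (z : EuclideanSpace ℝ (Fin (m + n))) (hz : planeCoord (m + n) hmn z ≠ 0)
    (v : Fin m → EuclideanSpace ℝ (Fin (m + n))) (hv : Orthonormal ℝ v) :
    DifferentiableAt ℝ X z ∧
      ∀ t : ℝ,
        ‖planeCoord (m + n) hmn z‖⁻¹ • planeCoord (m + n) hmn z =
          (WithLp.toLp 2 ![Real.cos t, Real.sin t] : EuclideanSpace ℝ (Fin 2)) →
        ∑ i, ⟪fderiv ℝ X z (v i), v i⟫ =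
          (φ t / ‖planeCoord (m + n) hmn z‖ ^ 2) *
            ∑ i, ⟪planePerp (m + n) hmn z, v i⟫ ^ 2 :=
  tangential_divergence_winding_field_general φ ψ hψ m n hmn X hX z hz v
end

section
/- Let m be a real number and let H, D, E : (0,1) → ℝ be functions such that H(r) > 0 and E(r) ≥ 0 for all r ∈ (0,1), H and D are differentiable on (0,1), and for every r ∈ (0,1): H'(r) = ((m−1)/r)·H(r) + 2·D(r), D'(r) = ((m−2)/r)·D(r) + 2·E(r), and D(r)² ≤ E(r)·H(r). Then the frequency function I(r) := r·D(r)/H(r) is nondecreasing on (0,1). -/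
/-! In the quotient rule for `I = r D / H` the terms carrying `m` cancel, leaving
`I' = 2 r (E H - D²) / H²`, which is nonnegative by `D² ≤ E H`. -/

open Set

theorem hasDerivAt_frequency {m e r : ℝ} {H D : ℝ → ℝ} (hr : r ≠ 0) (hHr : H r ≠ 0)
    (hH' : HasDerivAt H ((m - 1) / r * H r + 2 * D r) r)
    (hD' : HasDerivAt D ((m - 2) / r * D r + 2 * e) r) :
    HasDerivAt (fun s => s * D s / H s) (2 * r * (e * H r - D r ^ 2) / H r ^ 2) r := by
  have hrD : HasDerivAt (fun s => s * D s) (1 * D r + r * ((m - 2) / r * D r + 2 * e)) r :=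
    (hasDerivAt_id r).mul hD'
  refine (hrD.fun_div hH' hHr).congr_deriv ?_
  field_simp
  ring

theorem frequency_monotone_general (m : ℝ) (H D E : ℝ → ℝ)
    (hH : ∀ r ∈ Set.Ioo (0 : ℝ) 1, 0 < H r)
    (hH' : ∀ r ∈ Set.Ioo (0 : ℝ) 1, HasDerivAt H ((m - 1) / r * H r + 2 * D r) r)
    (hD' : ∀ r ∈ Set.Ioo (0 : ℝ) 1, HasDerivAt D ((m - 2) / r * D r + 2 * E r) r)
    (hCS : ∀ r ∈ Set.Ioo (0 : ℝ) 1, (D r) ^ 2 ≤ E r * H r) :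
    MonotoneOn (fun r => r * D r / H r) (Set.Ioo 0 1) := by
  set I' := fun r => 2 * r * (E r * H r - D r ^ 2) / H r ^ 2
  have hI : ∀ r ∈ Ioo (0 : ℝ) 1, HasDerivAt (fun s => s * D s / H s) (I' r) r := fun r hr =>
    hasDerivAt_frequency hr.1.ne' (hH r hr).ne' (hH' r hr) (hD' r hr)
  refine monotoneOn_of_hasDerivWithinAt_nonneg (f' := I') (convex_Ioo 0 1)
    (fun r hr => (hI r hr).continuousAt.continuousWithinAt) (fun r hr => ?_) (fun r hr => ?_)
  all_goals rw [interior_Ioo] at hr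
  · exact (hI r hr).hasDerivWithinAt.mono interior_subset
  · have hr₀ : 0 ≤ 2 * r := by linarith [hr.1]
    exact div_nonneg (mul_nonneg hr₀ (sub_nonneg.2 (hCS r hr))) (sq_nonneg _)

/-- Abstract monotonicity of the boundary frequency function: if `H > 0`, `E ≥ 0`,
`H' = ((m-1)/r)H + 2D`, `D' = ((m-2)/r)D + 2E` and `D² ≤ E·H` on `(0,1)`, then the
frequency `I(r) = r·D(r)/H(r)` is nondecreasing on `(0,1)`. -/
theorem frequency_monotone (m : ℝ) (H D E : ℝ → ℝ)
    (hH : ∀ r ∈ Set.Ioo (0 : ℝ) 1, 0 < H r)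
    (hE : ∀ r ∈ Set.Ioo (0 : ℝ) 1, 0 ≤ E r)
    (hH' : ∀ r ∈ Set.Ioo (0 : ℝ) 1, HasDerivAt H ((m - 1) / r * H r + 2 * D r) r)
    (hD' : ∀ r ∈ Set.Ioo (0 : ℝ) 1, HasDerivAt D ((m - 2) / r * D r + 2 * E r) r)
    (hCS : ∀ r ∈ Set.Ioo (0 : ℝ) 1, (D r) ^ 2 ≤ E r * H r) :
    MonotoneOn (fun r => r * D r / H r) (Set.Ioo 0 1) :=
  frequency_monotone_general m H D E hH hH' hD' hCS
end

section
/- Let m be a real number and let H, D : (0,1) → ℝ with H(r) > 0 for all r, H differentiable on (0,1) with H'(r) = ((m−1)/r)·H(r) + 2·D(r) for all r ∈ (0,1), and set I(r) := r·D(r)/H(r). Then: (i) the function r ↦ log(H(r)/r^{m−1}) is differentiable on (0,1) with derivative at s equal to 2·I(s)/s; (ii) if moreover I is nondecreasing on (0,1), then for all 0 < r ≤ t < 1 one has (r/t)^{2I(t)} · H(t)/t^{m−1} ≤ H(r)/r^{m−1} ≤ (r/t)^{2I(r)} · H(t)/t^{m−1}. -/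
/-!
Writing `F(r) = log (H(r) / r^{m-1}) = log H(r) - (m-1) log r`, the identity for `H'` gives
`F'(r) = H'/H - (m-1)/r = 2 D/H = 2 I(r)/r`. When `I` is nondecreasing, on `[r, t]` the
derivative `F'(x) = 2 I(x)/x` lies between `2 I(r)/x` and `2 I(t)/x`, so integrating gives
`2 I(r) log(t/r) ≤ F(t) - F(r) ≤ 2 I(t) log(t/r)`; exponentiating yields the two bounds.
-/

open Real Set

theorem hasDerivAt_log_div_rpow {H : ℝ → ℝ} {H' a r : ℝ} (hH : HasDerivAt H H' r)
    (hHr : 0 < H r) (hr : 0 < r) :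
    HasDerivAt (fun x => log (H x / x ^ a)) (H' / H r - a / r) r := by
  have hlog : HasDerivAt (fun x => log (H x) - a * log x) (H' / H r - a * r⁻¹) r :=
    (hH.log hHr.ne').sub ((hasDerivAt_log hr.ne').const_mul a)
  refine (div_eq_mul_inv a r ▸ hlog).congr_of_eventuallyEq ?_
  filter_upwards [hH.continuousAt.eventually_ne hHr.ne', eventually_gt_nhds hr] with x hHx hx
  rw [log_div hHx (rpow_pos_of_pos hx a).ne', log_rpow hx]

theorem mul_log_div_le_sub_of_hasDerivAt {f g : ℝ → ℝ} {c r t : ℝ} (hr : 0 < r) (hrt : r ≤ t)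
    (hf : ∀ x ∈ Icc r t, HasDerivAt f (g x / x) x) (hc : ∀ x ∈ Icc r t, c ≤ g x) :
    c * log (t / r) ≤ f t - f r := by
  have hφ : ∀ x ∈ Icc r t, HasDerivAt (fun x => f x - c * log x) (g x / x - c * x⁻¹) x :=
    fun x hx => (hf x hx).sub ((hasDerivAt_log (hr.trans_le hx.1).ne').const_mul c)
  have hmono : MonotoneOn (fun x => f x - c * log x) (Icc r t) := by
    refine monotoneOn_of_hasDerivWithinAt_nonneg (convex_Icc r t)
      (fun x hx => (hφ x hx).continuousAt.continuousWithinAt)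
      (fun x hx => (hφ x (interior_subset hx)).hasDerivWithinAt) fun x hx => ?_
    have hx' := interior_subset hx
    rw [← div_eq_mul_inv, ← sub_div]
    exact div_nonneg (sub_nonneg.2 (hc x hx')) (hr.trans_le hx'.1).le
  have := hmono (left_mem_Icc.2 hrt) (right_mem_Icc.2 hrt) hrt
  rw [log_div (hr.trans_le hrt).ne' hr.ne']
  linarith

theorem sub_le_mul_log_div_of_hasDerivAt {f g : ℝ → ℝ} {c r t : ℝ} (hr : 0 < r) (hrt : r ≤ t)
    (hf : ∀ x ∈ Icc r t, HasDerivAt f (g x / x) x) (hc : ∀ x ∈ Icc r t, g x ≤ c) :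
    f t - f r ≤ c * log (t / r) := by
  have := mul_log_div_le_sub_of_hasDerivAt (f := -f) (g := -g) (c := -c) hr hrt
    (fun x hx => by simpa only [Pi.neg_apply, neg_div] using (hf x hx).neg)
    (fun x hx => neg_le_neg (hc x hx))
  simp only [Pi.neg_apply] at this
  linarith

theorem div_rpow_mul_exp_eq_exp_sub {r t c F : ℝ} (hr : 0 < r) (ht : 0 < t) :
    (r / t) ^ c * exp F = exp (F - c * log (t / r)) := by
  rw [rpow_def_of_pos (div_pos hr ht), ← exp_add, ← inv_div, log_inv]
  congr 1
  ring

/-- Consequences of the outer-variation identity `H' = ((m-1)/r)H + 2D`: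
(i) `log(H(r)/r^{m-1})` has derivative `2 I(s)/s` at every `s ∈ (0,1)`, where
`I(r) = r·D(r)/H(r)`; (ii) if moreover `I` is nondecreasing on `(0,1)`, then for
`0 < r ≤ t < 1`,
`(r/t)^{2I(t)} · H(t)/t^{m-1} ≤ H(r)/r^{m-1} ≤ (r/t)^{2I(r)} · H(t)/t^{m-1}`. -/
theorem log_height_derivative_and_doubling (m : ℝ) (H D : ℝ → ℝ)
    (hH : ∀ r ∈ Set.Ioo (0 : ℝ) 1, 0 < H r)
    (hH' : ∀ r ∈ Set.Ioo (0 : ℝ) 1, HasDerivAt H ((m - 1) / r * H r + 2 * D r) r)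
    (I : ℝ → ℝ) (hI : ∀ r, I r = r * D r / H r) :
    (∀ s ∈ Set.Ioo (0 : ℝ) 1,
      HasDerivAt (fun r : ℝ => Real.log (H r / r ^ (m - 1))) (2 * I s / s) s) ∧
    (MonotoneOn I (Set.Ioo 0 1) →
      ∀ r t : ℝ, 0 < r → r ≤ t → t < 1 →
        (r / t) ^ (2 * I t) * (H t / t ^ (m - 1)) ≤ H r / r ^ (m - 1) ∧
        H r / r ^ (m - 1) ≤ (r / t) ^ (2 * I r) * (H t / t ^ (m - 1))) := by
  set F : ℝ → ℝ := fun r => log (H r / r ^ (m - 1))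
  have hF : ∀ s ∈ Ioo (0 : ℝ) 1, HasDerivAt F (2 * I s / s) s := by
    intro s hs
    convert hasDerivAt_log_div_rpow (hH' s hs) (hH s hs) hs.1 using 1
    rw [hI]
    field_simp [(hH s hs).ne', hs.1.ne']
    ring
  refine ⟨hF, fun hmono r t hr hrt ht => ?_⟩
  have hIcc : Icc r t ⊆ Ioo 0 1 := Icc_subset_Ioo hr ht
  have hF' : ∀ x ∈ Icc r t, HasDerivAt F (2 * I x / x) x := fun x hx => hF x (hIcc hx)
  have hlow := mul_log_div_le_sub_of_hasDerivAt hr hrt hF' fun x hx =>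
    mul_le_mul_of_nonneg_left (hmono (hIcc (left_mem_Icc.2 hrt)) (hIcc hx) hx.1) zero_le_two
  have hup := sub_le_mul_log_div_of_hasDerivAt hr hrt hF' fun x hx =>
    mul_le_mul_of_nonneg_left (hmono (hIcc hx) (hIcc (right_mem_Icc.2 hrt)) hx.2) zero_le_two
  have hexpF : ∀ x ∈ Icc r t, exp (F x) = H x / x ^ (m - 1) := fun x hx =>
    exp_log (div_pos (hH x (hIcc hx)) (rpow_pos_of_pos (hIcc hx).1 _))
  rw [← hexpF r (left_mem_Icc.2 hrt), ← hexpF t (right_mem_Icc.2 hrt),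
    div_rpow_mul_exp_eq_exp_sub hr (hr.trans_le hrt), div_rpow_mul_exp_eq_exp_sub hr (hr.trans_le hrt)]
  exact ⟨exp_le_exp.2 (by linarith), exp_le_exp.2 (by linarith)⟩
end

section
/- Let m be a real number and let H, D : (0,1) → ℝ with H(r) > 0 and D(r) ≥ 0 for all r, H differentiable on (0,1) with H'(r) = ((m−1)/r)·H(r) + 2·D(r) for all r ∈ (0,1), and set I(r) := r·D(r)/H(r). Assume I is nondecreasing on (0,1). Then for all 0 < r ≤ t < 1 with I(t) > 0: (I(r)/I(t)) · (r/t)^{2I(t)} · D(t)/t^{m−2} ≤ D(r)/r^{m−2} ≤ (r/t)^{2I(r)} · D(t)/t^{m−2}. -/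
/-!
Normalise the height as `N(s) = H(s) / s^(m-1)`. The ODE for `H` gives `N' = 2D / s^(m-1)`,
that is `s N'(s) = 2 I(s) N(s)`, so `N` behaves like `s^(2I)`. Monotonicity of the frequency
squeezes `I(s)` between `I(r)` and `I(t)` on `[r, t]`, which makes `N(s) / s^(2I(r))` nondecreasing
and `N(s) / s^(2I(t))` nonincreasing there; the energy bounds follow from `D(s)/s^(m-2) = I(s) N(s)`.
-/

open Set

section PowerComparison

variable {f f' : ℝ → ℝ}

theorem HasDerivAt.div_rpow_const_self {g : ℝ} {a s : ℝ} (hf : HasDerivAt f g s) (hs : 0 < s) :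
    HasDerivAt (fun x => f x / x ^ a) ((g - a / s * f s) / s ^ a) s := by
  have hpow := Real.hasDerivAt_rpow_const (p := a) (Or.inl hs.ne')
  have hsa : s ^ a = s ^ (a - 1) * s := by
    rw [← Real.rpow_add_one hs.ne', sub_add_cancel]
  have hsa0 : s ^ (a - 1) ≠ 0 := (Real.rpow_pos_of_pos hs _).ne'
  refine (hf.div hpow (Real.rpow_pos_of_pos hs a).ne').congr_deriv ?_
  rw [hsa]
  field_simp

variable {a r t : ℝ}

theorem le_rpow_div_mul_of_mul_le_deriv (hr : 0 < r) (hrt : r ≤ t)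
    (hf : ContinuousOn f (Icc r t)) (hf' : ∀ s ∈ Ioo r t, HasDerivAt f (f' s) s)
    (h : ∀ s ∈ Ioo r t, a * f s ≤ s * f' s) :
    f r ≤ (r / t) ^ a * f t := by
  have ht : 0 < t := hr.trans_le hrt
  have hmono : MonotoneOn (fun s => f s / s ^ a) (Icc r t) := by
    refine monotoneOn_of_hasDerivWithinAt_nonneg (f' := fun s => (f' s - a / s * f s) / s ^ a)
      (convex_Icc r t) ?_ (fun s hs => ?_) (fun s hs => ?_)
    · exact hf.div (continuousOn_id.rpow_const fun s hs => Or.inl (hr.trans_le hs.1).ne')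
        fun s hs => (Real.rpow_pos_of_pos (hr.trans_le hs.1) a).ne'
    · rw [interior_Icc] at hs
      exact ((hf' s hs).div_rpow_const_self (hr.trans hs.1)).hasDerivWithinAt
    · rw [interior_Icc] at hs
      have hs0 : 0 < s := hr.trans hs.1
      have : 0 ≤ f' s - a / s * f s := by
        rw [sub_nonneg, div_mul_eq_mul_div, div_le_iff₀ hs0, mul_comm (f' s)]
        exact h s hs
      exact div_nonneg this (Real.rpow_nonneg hs0.le a)
  have hquot : f r / r ^ a ≤ f t / t ^ a :=
    hmono (left_mem_Icc.2 hrt) (right_mem_Icc.2 hrt) hrt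
  rw [div_le_iff₀ (Real.rpow_pos_of_pos hr a)] at hquot
  calc f r ≤ f t / t ^ a * r ^ a := hquot
    _ = (r / t) ^ a * f t := by rw [Real.div_rpow hr.le ht.le]; ring

theorem rpow_div_mul_le_of_deriv_le_mul (hr : 0 < r) (hrt : r ≤ t)
    (hf : ContinuousOn f (Icc r t)) (hf' : ∀ s ∈ Ioo r t, HasDerivAt f (f' s) s)
    (h : ∀ s ∈ Ioo r t, s * f' s ≤ a * f s) :
    (r / t) ^ a * f t ≤ f r := by
  have := le_rpow_div_mul_of_mul_le_deriv (f := -f) (f' := -f') hr hrt hf.neg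
    (fun s hs => (hf' s hs).neg) fun s hs => by
      simp only [Pi.neg_apply, mul_neg, neg_le_neg_iff]
      exact h s hs
  simpa only [Pi.neg_apply, mul_neg, neg_le_neg_iff] using this

end PowerComparison

section Frequency

variable {m : ℝ} {H D I : ℝ → ℝ}

theorem hasDerivAt_div_rpow_sub_one {s : ℝ} (hs : 0 < s)
    (hH' : HasDerivAt H ((m - 1) / s * H s + 2 * D s) s) :
    HasDerivAt (fun x => H x / x ^ (m - 1)) (2 * D s / s ^ (m - 1)) s :=
  (hH'.div_rpow_const_self hs).congr_deriv (by ring)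

theorem div_rpow_sub_one_comparison (hH : ∀ r ∈ Ioo (0 : ℝ) 1, 0 < H r)
    (hH' : ∀ r ∈ Ioo (0 : ℝ) 1, HasDerivAt H ((m - 1) / r * H r + 2 * D r) r)
    (hI : ∀ r, I r = r * D r / H r) (hmono : MonotoneOn I (Ioo 0 1))
    {r t : ℝ} (hr : 0 < r) (hrt : r ≤ t) (ht1 : t < 1) :
    (r / t) ^ (2 * I t) * (H t / t ^ (m - 1)) ≤ H r / r ^ (m - 1) ∧
      H r / r ^ (m - 1) ≤ (r / t) ^ (2 * I r) * (H t / t ^ (m - 1)) := by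
  set N : ℝ → ℝ := fun s => H s / s ^ (m - 1)
  have hsub : Icc r t ⊆ Ioo 0 1 := fun s hs => ⟨hr.trans_le hs.1, hs.2.trans_lt ht1⟩
  have hN : ∀ s ∈ Icc r t, HasDerivAt N (2 * D s / s ^ (m - 1)) s := fun s hs =>
    hasDerivAt_div_rpow_sub_one (hsub hs).1 (hH' s (hsub hs))
  have hNcont : ContinuousOn N (Icc r t) := fun s hs =>
    (hN s hs).continuousAt.continuousWithinAt
  have hN' : ∀ s ∈ Ioo r t, HasDerivAt N (2 * D s / s ^ (m - 1)) s := fun s hs =>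
    hN s (Ioo_subset_Icc_self hs)
  have hN_nonneg : ∀ s ∈ Icc r t, 0 ≤ N s := fun s hs =>
    div_nonneg (hH s (hsub hs)).le (Real.rpow_nonneg (hsub hs).1.le _)
  have hlogDeriv : ∀ s ∈ Icc r t, s * (2 * D s / s ^ (m - 1)) = 2 * I s * N s := by
    intro s hs
    have hHs := (hH s (hsub hs)).ne'
    simp only [N, hI s]
    field_simp
  have hI_le : ∀ s ∈ Icc r t, I r ≤ I s ∧ I s ≤ I t := fun s hs =>
    ⟨hmono (hsub (left_mem_Icc.2 hrt)) (hsub hs) hs.1,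
      hmono (hsub hs) (hsub (right_mem_Icc.2 hrt)) hs.2⟩
  constructor
  · refine rpow_div_mul_le_of_deriv_le_mul hr hrt hNcont hN' fun s hs => ?_
    have hs := Ioo_subset_Icc_self hs
    rw [hlogDeriv s hs]
    exact mul_le_mul_of_nonneg_right (by linarith [hI_le s hs]) (hN_nonneg s hs)
  · refine le_rpow_div_mul_of_mul_le_deriv hr hrt hNcont hN' fun s hs => ?_
    have hs := Ioo_subset_Icc_self hs
    rw [hlogDeriv s hs]
    exact mul_le_mul_of_nonneg_right (by linarith [hI_le s hs]) (hN_nonneg s hs)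

end Frequency

/-- Energy comparison from frequency monotonicity: if `H > 0`, `D ≥ 0`,
`H' = ((m-1)/r)H + 2D` on `(0,1)` and the frequency `I(r) = r·D(r)/H(r)` is
nondecreasing, then for `0 < r ≤ t < 1` with `I(t) > 0`,
`(I(r)/I(t)) (r/t)^{2I(t)} D(t)/t^{m-2} ≤ D(r)/r^{m-2} ≤ (r/t)^{2I(r)} D(t)/t^{m-2}`. -/
theorem dirichlet_energy_comparison (m : ℝ) (H D : ℝ → ℝ)
    (hH : ∀ r ∈ Set.Ioo (0 : ℝ) 1, 0 < H r)
    (hD : ∀ r ∈ Set.Ioo (0 : ℝ) 1, 0 ≤ D r)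
    (hH' : ∀ r ∈ Set.Ioo (0 : ℝ) 1, HasDerivAt H ((m - 1) / r * H r + 2 * D r) r)
    (I : ℝ → ℝ) (hI : ∀ r, I r = r * D r / H r)
    (hmono : MonotoneOn I (Set.Ioo 0 1)) :
    ∀ r t : ℝ, 0 < r → r ≤ t → t < 1 → 0 < I t →
      (I r / I t) * (r / t) ^ (2 * I t) * (D t / t ^ (m - 2)) ≤ D r / r ^ (m - 2) ∧
      D r / r ^ (m - 2) ≤ (r / t) ^ (2 * I r) * (D t / t ^ (m - 2)) := by
  intro r t hr hrt ht1 hIt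
  obtain ⟨hlower, hupper⟩ := div_rpow_sub_one_comparison hH hH' hI hmono hr hrt ht1
  have hr1 : r ∈ Ioo (0 : ℝ) 1 := ⟨hr, hrt.trans_lt ht1⟩
  replace ht1 : t ∈ Ioo (0 : ℝ) 1 := ⟨hr.trans_le hrt, ht1⟩
  have henergy : ∀ s ∈ Ioo (0 : ℝ) 1, D s / s ^ (m - 2) = I s * (H s / s ^ (m - 1)) := by
    intro s hs
    have hHs := (hH s hs).ne'
    have hs0 := hs.1.ne'
    rw [hI s, show m - 1 = m - 2 + 1 by ring, Real.rpow_add_one hs.1.ne']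
    field_simp
  have hIr : 0 ≤ I r := by
    rw [hI r]
    exact div_nonneg (mul_nonneg hr.le (hD r hr1)) (hH r hr1).le
  have hNt : 0 ≤ H t / t ^ (m - 1) := div_nonneg (hH t ht1).le (Real.rpow_nonneg ht1.1.le _)
  rw [henergy r hr1, henergy t ht1]
  constructor
  · calc I r / I t * (r / t) ^ (2 * I t) * (I t * (H t / t ^ (m - 1)))
        = I r * ((r / t) ^ (2 * I t) * (H t / t ^ (m - 1))) := by field_simp
      _ ≤ I r * (H r / r ^ (m - 1)) := mul_le_mul_of_nonneg_left hlower hIr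
  · calc I r * (H r / r ^ (m - 1))
        ≤ I r * ((r / t) ^ (2 * I r) * (H t / t ^ (m - 1))) :=
          mul_le_mul_of_nonneg_left hupper hIr
      _ ≤ I t * ((r / t) ^ (2 * I r) * (H t / t ^ (m - 1))) :=
          mul_le_mul_of_nonneg_right (hmono hr1 ht1 hrt)
            (mul_nonneg (Real.rpow_nonneg (div_pos hr ht1.1).le _) hNt)
      _ = (r / t) ^ (2 * I r) * (I t * (H t / t ^ (m - 1))) := by ring
end

section
/- Let m be a real number and let H, D : (0,1) → ℝ with H(r) > 0 and D(r) ≥ 0 for all r, H differentiable on (0,1) with H'(r) = ((m−1)/r)·H(r) + 2·D(r) for all r ∈ (0,1), and set I(r) := r·D(r)/H(r). Assume I is nondecreasing on (0,1) and that α ≥ 0 satisfies α ≤ I(r) for all r ∈ (0,1). Then for all 0 < r ≤ t < 1 one has D(r) ≤ (r/t)^{m−2+2α} · D(t). -/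
/-- Growth bound for the Dirichlet energy: if `H > 0`, `D ≥ 0`,
`H' = ((m-1)/r)H + 2D` on `(0,1)`, the frequency `I(r) = r·D(r)/H(r)` is nondecreasing
and bounded below by `α ≥ 0`, then `D(r) ≤ (r/t)^{m-2+2α} D(t)` for `0 < r ≤ t < 1`. -/
theorem dirichlet_energy_growth (m α : ℝ) (hα : 0 ≤ α) (H D : ℝ → ℝ)
    (hH : ∀ r ∈ Set.Ioo (0 : ℝ) 1, 0 < H r)
    (hD : ∀ r ∈ Set.Ioo (0 : ℝ) 1, 0 ≤ D r)
    (hH' : ∀ r ∈ Set.Ioo (0 : ℝ) 1, HasDerivAt H ((m - 1) / r * H r + 2 * D r) r)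
    (I : ℝ → ℝ) (hI : ∀ r, I r = r * D r / H r)
    (hmono : MonotoneOn I (Set.Ioo 0 1))
    (hlb : ∀ r ∈ Set.Ioo (0 : ℝ) 1, α ≤ I r) :
    ∀ r t : ℝ, 0 < r → r ≤ t → t < 1 →
      D r ≤ (r / t) ^ (m - 2 + 2 * α) * D t := by
  intro r t hr hrt ht1
  set γ : ℝ := m - 1 + 2 * α with hγ
  set β : ℝ := m - 2 + 2 * α with hβ
  have hrmem : r ∈ Set.Ioo (0 : ℝ) 1 := ⟨hr, lt_of_le_of_lt hrt ht1⟩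
  have htmem : t ∈ Set.Ioo (0 : ℝ) 1 := ⟨lt_of_lt_of_le hr hrt, ht1⟩
  set F : ℝ → ℝ := fun x => H x / x ^ γ with hF
  -- derivative of F
  have hFderiv : ∀ x ∈ Set.Ioo (0 : ℝ) 1, HasDerivAt F
      ((((m - 1) / x * H x + 2 * D x) * x ^ γ - H x * (γ * x ^ (γ - 1))) / (x ^ γ) ^ 2) x := by
    intro x hx
    have hx0 : (0 : ℝ) < x := hx.1
    have hg : HasDerivAt (fun y : ℝ => y ^ γ) (γ * x ^ (γ - 1)) x :=
      Real.hasDerivAt_rpow_const (Or.inl hx0.ne')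
    exact (hH' x hx).div hg (by positivity)
  have hFderiv_nonneg : ∀ x ∈ Set.Ioo (0 : ℝ) 1, 0 ≤
      (((m - 1) / x * H x + 2 * D x) * x ^ γ - H x * (γ * x ^ (γ - 1))) / (x ^ γ) ^ 2 := by
    intro x hx
    have hx0 : (0 : ℝ) < x := hx.1
    have hHx := hH x hx
    have hIb := hlb x hx
    rw [hI x] at hIb
    have hkey : α * H x ≤ x * D x := (le_div_iff₀ hHx).mp hIb
    have hxg : x ^ γ = x ^ (γ - 1) * x := by
      rw [← Real.rpow_add_one hx0.ne' (γ - 1)]; ring_nf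
    have hnum : ((m - 1) / x * H x + 2 * D x) * x ^ γ - H x * (γ * x ^ (γ - 1))
        = x ^ (γ - 1) * (2 * (x * D x - α * H x)) := by
      rw [hxg, hγ]; field_simp; ring
    rw [hnum]
    have h1 : (0:ℝ) < x ^ (γ - 1) := Real.rpow_pos_of_pos hx0 _
    have h2 : (0:ℝ) ≤ 2 * (x * D x - α * H x) := by linarith
    positivity
  -- F is monotone on (0,1)
  have hFmono : MonotoneOn F (Set.Ioo 0 1) := by
    have hint : interior (Set.Ioo (0:ℝ) 1) = Set.Ioo 0 1 := interior_Ioo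
    apply monotoneOn_of_deriv_nonneg (convex_Ioo 0 1)
    · intro x hx
      exact ((hFderiv x hx).continuousAt).continuousWithinAt
    · intro x hx
      rw [hint] at hx
      exact (hFderiv x hx).differentiableAt.differentiableWithinAt
    · intro x hx
      rw [hint] at hx
      rw [(hFderiv x hx).deriv]
      exact hFderiv_nonneg x hx
  -- nonnegativity of I and F
  have hInonneg : ∀ x ∈ Set.Ioo (0 : ℝ) 1, 0 ≤ I x := by
    intro x hx
    rw [hI x]
    have := hH x hx; have := hD x hx; have := hx.1
    positivity
  have hFnonneg : ∀ x ∈ Set.Ioo (0 : ℝ) 1, 0 ≤ F x := by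
    intro x hx
    have := hH x hx
    have : (0:ℝ) < x ^ γ := Real.rpow_pos_of_pos hx.1 _
    have := hH x hx
    positivity
  -- key identities
  have hid : ∀ x ∈ Set.Ioo (0 : ℝ) 1, I x * F x = D x / x ^ β := by
    intro x hx
    have hx0 : (0 : ℝ) < x := hx.1
    have hHx := (hH x hx).ne'
    have hxg : x ^ γ = x ^ β * x := by
      rw [← Real.rpow_add_one hx0.ne' β, hβ, hγ]; ring_nf
    have hxb : (0:ℝ) < x ^ β := Real.rpow_pos_of_pos hx0 _
    rw [hI x, hF]
    simp only
    rw [hxg]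
    field_simp
  have hmul : I r * F r ≤ I t * F t :=
    mul_le_mul (hmono hrmem htmem hrt) (hFmono hrmem htmem hrt)
      (hFnonneg r hrmem) (hInonneg t htmem)
  have hrb : (0:ℝ) < r ^ β := Real.rpow_pos_of_pos hr _
  have htb : (0:ℝ) < t ^ β := Real.rpow_pos_of_pos htmem.1 _
  have h1 : D r / r ^ β ≤ D t / t ^ β := by
    rw [← hid r hrmem, ← hid t htmem]; exact hmul
  have h2 : D r ≤ D t / t ^ β * r ^ β := by
    calc D r = D r / r ^ β * r ^ β := by field_simp
      _ ≤ D t / t ^ β * r ^ β := mul_le_mul_of_nonneg_right h1 hrb.le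
  calc D r ≤ D t / t ^ β * r ^ β := h2
    _ = (r / t) ^ β * D t := by
        rw [Real.div_rpow hr.le htmem.1.le]; field_simp
end

section
/- Let m be a real number, α > 0, and let H, D : (0,∞) → ℝ with H(r) > 0 and D(r) ≥ 0 for all r, H differentiable on (0,∞) with H'(r) = ((m−1)/r)·H(r) + 2·D(r) for all r > 0, and set I(r) := r·D(r)/H(r). Assume I is nondecreasing on (0,∞), that α ≤ I(r) for all r > 0, and that there exist constants 0 < c₁ ≤ c₂ with c₁·r^{m−2+2α} ≤ D(r) ≤ c₂·r^{m−2+2α} for all r > 0. Then I(r) = α for every r > 0. -/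
/-- Rigidity of the frequency under two-sided energy growth: if `H > 0`, `D ≥ 0`,
`H' = ((m-1)/r)H + 2D` on `(0,∞)`, the frequency `I(r) = r·D(r)/H(r)` is nondecreasing
and bounded below by `α > 0`, and `c₁ r^{m-2+2α} ≤ D(r) ≤ c₂ r^{m-2+2α}` for all `r > 0`,
then `I ≡ α` on `(0,∞)`. -/
theorem frequency_constant_of_energy_growth (m α : ℝ) (hα : 0 < α) (H D : ℝ → ℝ)
    (hH : ∀ r ∈ Set.Ioi (0 : ℝ), 0 < H r)
    (hD : ∀ r ∈ Set.Ioi (0 : ℝ), 0 ≤ D r)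
    (hH' : ∀ r ∈ Set.Ioi (0 : ℝ), HasDerivAt H ((m - 1) / r * H r + 2 * D r) r)
    (I : ℝ → ℝ) (hI : ∀ r, I r = r * D r / H r)
    (hmono : MonotoneOn I (Set.Ioi 0))
    (hlb : ∀ r ∈ Set.Ioi (0 : ℝ), α ≤ I r)
    (c₁ c₂ : ℝ) (hc₁ : 0 < c₁) (hc₁₂ : c₁ ≤ c₂)
    (hgrow : ∀ r ∈ Set.Ioi (0 : ℝ),
      c₁ * r ^ (m - 2 + 2 * α) ≤ D r ∧ D r ≤ c₂ * r ^ (m - 2 + 2 * α)) :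
    ∀ r ∈ Set.Ioi (0 : ℝ), I r = α := by
  intro r₀ hr₀
  by_contra hne
  have hr₀' : (0:ℝ) < r₀ := hr₀
  have hβ : α < I r₀ := lt_of_le_of_ne (hlb r₀ hr₀) (Ne.symm hne)
  set β := I r₀ with hβdef
  have hβpos : 0 < β := hα.trans hβ
  set k := m - 1 + 2 * β with hkdef
  -- key: β * H r ≤ r * D r for r ≥ r₀
  have key : ∀ r, r₀ ≤ r → β * H r ≤ r * D r := by
    intro r hr
    have hrpos : (0:ℝ) < r := lt_of_lt_of_le hr₀' hr
    have h1 : β ≤ I r := hmono hr₀ hrpos hr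
    rw [hI] at h1
    exact (le_div_iff₀ (hH r hrpos)).mp h1
  set G : ℝ → ℝ := fun r => H r * r ^ (-k) with hGdef
  have hGd : ∀ r ∈ Set.Ioi (0:ℝ), HasDerivAt G
      (((m-1)/r * H r + 2 * D r) * r ^ (-k) + H r * (-k * r ^ (-k-1))) r := by
    intro r hr
    have h1 := hH' r hr
    have h2 : HasDerivAt (fun x : ℝ => x ^ (-k)) (-k * r ^ (-k-1)) r := by
      simpa using Real.hasDerivAt_rpow_const (x := r) (p := -k) (Or.inl (ne_of_gt hr))
    exact h1.mul h2
  have hmonoG : MonotoneOn G (Set.Ici r₀) := by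
    apply monotoneOn_of_deriv_nonneg (convex_Ici r₀)
    · intro r hr
      exact ((hGd r (lt_of_lt_of_le hr₀' hr)).continuousAt).continuousWithinAt
    · intro r hr
      rw [interior_Ici] at hr
      exact ((hGd r (hr₀'.trans hr)).differentiableAt).differentiableWithinAt
    · intro r hr
      rw [interior_Ici] at hr
      have hrpos : (0:ℝ) < r := hr₀'.trans hr
      rw [(hGd r hrpos).deriv]
      have hk1 : r ^ (-k) = r ^ (-k-1) * r := by
        rw [← Real.rpow_add_one (ne_of_gt hrpos)]
        ring_nf
      have hpow : (0:ℝ) < r ^ (-k-1) := Real.rpow_pos_of_pos hrpos _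
      have hkey := key r hr.le
      have heq : ((m-1)/r * H r + 2 * D r) * r ^ (-k) + H r * (-k * r ^ (-k-1))
          = r ^ (-k-1) * (2*(r * D r) - 2*(β * H r)) := by
        rw [hk1, hkdef]
        field_simp
        ring
      rw [heq]
      have : (0:ℝ) ≤ 2*(r * D r) - 2*(β * H r) := by linarith
      positivity
  -- lower bound for D on [r₀, ∞)
  have hGr₀pos : 0 < G r₀ := mul_pos (hH r₀ hr₀) (Real.rpow_pos_of_pos hr₀' _)
  have lower : ∀ r, r₀ ≤ r → β * G r₀ * r ^ (2*β - 2*α) ≤ c₂ := by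
    intro r hr
    have hrpos : (0:ℝ) < r := lt_of_lt_of_le hr₀' hr
    have hG := hmonoG Set.self_mem_Ici hr hr
    -- H r ≥ G r₀ * r ^ k
    have hHr : G r₀ * r ^ k ≤ H r := by
      have hrk : (0:ℝ) < r ^ k := Real.rpow_pos_of_pos hrpos _
      have : G r₀ * r ^ k ≤ (H r * r ^ (-k)) * r ^ k :=
        mul_le_mul_of_nonneg_right hG hrk.le
      have hid : (H r * r ^ (-k)) * r ^ k = H r := by
        rw [mul_assoc, ← Real.rpow_add hrpos]
        simp
      linarith [this, hid ▸ this]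
    have hkey := key r hr
    have hub := (hgrow r hrpos).2
    -- β * G r₀ * r ^ k ≤ β * H r ≤ r * D r ≤ r * c₂ * r^(m-2+2α)
    have h2 : β * (G r₀ * r ^ k) ≤ r * D r :=
      le_trans (mul_le_mul_of_nonneg_left hHr hβpos.le) hkey
    have h3 : r * D r ≤ c₂ * (r * r ^ (m - 2 + 2*α)) := by
      have := mul_le_mul_of_nonneg_left hub hrpos.le
      linarith [this]
    have hsplit : r ^ k = (r * r ^ (m - 2 + 2*α)) * r ^ (2*β - 2*α) := by
      have hke : k = 1 + (m - 2 + 2*α) + (2*β - 2*α) := by rw [hkdef]; ring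
      rw [hke, Real.rpow_add hrpos, Real.rpow_add hrpos, Real.rpow_one]
    have hbase : (0:ℝ) < r * r ^ (m - 2 + 2*α) :=
      mul_pos hrpos (Real.rpow_pos_of_pos hrpos _)
    have h4 : β * G r₀ * r ^ (2*β - 2*α) * (r * r ^ (m - 2 + 2*α))
        ≤ c₂ * (r * r ^ (m - 2 + 2*α)) := by
      calc β * G r₀ * r ^ (2*β - 2*α) * (r * r ^ (m - 2 + 2*α))
          = β * (G r₀ * r ^ k) := by rw [hsplit]; ring
        _ ≤ r * D r := h2
        _ ≤ c₂ * (r * r ^ (m - 2 + 2*α)) := h3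
    exact le_of_mul_le_mul_right h4 hbase
  -- contradiction: LHS → ∞ as r → ∞
  have htend : Filter.Tendsto (fun r : ℝ => β * G r₀ * r ^ (2*β - 2*α))
      Filter.atTop Filter.atTop := by
    apply Filter.Tendsto.const_mul_atTop (mul_pos hβpos hGr₀pos)
    exact tendsto_rpow_atTop (by linarith)
  obtain ⟨r, hr1, hr2⟩ := ((htend.eventually_gt_atTop c₂).and
    (Filter.eventually_ge_atTop r₀)).exists
  exact absurd (lower r hr2) (not_le.mpr hr1)
end
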